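/- Let h ≥ 0 and β > (3/2)·cosh²(h). Then there exists exactly one λ > 0 such that Γ_{β,h}(λ) = λ. -/

import Mathlib

/-!
Writing `tanh (x + h) + tanh (x - h) = 2 sinh 2x / (cosh 2x + cosh 2h)` and `u = 2x`, the fixed
points are the zeros `u > 0` of `Φ u = K sinh u - u (cosh u + c)` with `K = 4β/3`, `c = cosh 2h`;
the hypothesis on `β` is `Φ' 0 = K - 1 - c > 0`. A zero exists because `Φ` is positive just
right of `0` and `Φ u → -∞`. It is unique because `Φ'' u = cosh u ((K - 2) tanh u - u)` and,
`tanh` being concave on `[0, ∞)`, `Φ''` stays negative once it is: two positive zeros `s < t` would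
give, by Rolle, zeros `p < s < q` of `Φ'` and a zero of `Φ''` in `(p, q)`, whereas the mean value
theorem on `[0, p]` makes `Φ''` negative somewhere in `(0, p)`.
-/

open Real Set Filter Topology

lemma exists_mem_Ioo_eq_zero_of_hasDerivAt_pos {f : ℝ → ℝ} {f' a b : ℝ} (hab : a < b)
    (hf : ContinuousOn f (Icc a b)) (hfa : f a = 0) (hf'a : HasDerivAt f f' a) (hf' : 0 < f')
    (hfb : f b < 0) : ∃ x ∈ Ioo a b, f x = 0 := by
  have hslope : ∀ᶠ y in 𝓝[>] a, 0 < slope f a y :=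
    (hasDerivAt_iff_tendsto_slope.mp hf'a |>.mono_left (nhdsGT_le_nhdsNE a)).eventually
      (eventually_gt_nhds hf')
  obtain ⟨y, hy, hya, hyb⟩ := (hslope.and (Ioo_mem_nhdsGT hab)).exists
  obtain ⟨x, hx, hfx⟩ := intermediate_value_Ioo' hyb.le (hf.mono (Icc_subset_Icc hya.le le_rfl))
    ⟨hfb, pos_of_slope_pos hya hy hfa⟩
  exact ⟨x, ⟨hya.trans hx.1, hx.2⟩, hfx⟩

lemma subsingleton_zeros_Ioi_of_deriv2_neg_persists {f f' f'' : ℝ → ℝ} {a : ℝ}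
    (hf : ∀ x, HasDerivAt f (f' x) x) (hf' : ∀ x, HasDerivAt f' (f'' x) x)
    (hfa : f a = 0) (hf'a : 0 < f' a)
    (hf'' : ∀ ⦃e d⦄, a < e → e < d → f'' e < 0 → f'' d < 0) :
    {x | a < x ∧ f x = 0}.Subsingleton := by
  have hfc : Continuous f := continuous_iff_continuousAt.2 fun x => (hf x).continuousAt
  have hf'c : Continuous f' := continuous_iff_continuousAt.2 fun x => (hf' x).continuousAt
  intro s ⟨has, hfs⟩ t ⟨hat, hft⟩
  by_contra hst
  wlog hlt : s < t generalizing s t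
  · exact this hat hft has hfs (Ne.symm hst) (lt_of_le_of_ne (not_lt.1 hlt) (Ne.symm hst))
  obtain ⟨p, hp, hf'p⟩ := exists_hasDerivAt_eq_zero has hfc.continuousOn
    (hfa.trans hfs.symm) fun x _ => hf x
  obtain ⟨q, hq, hf'q⟩ := exists_hasDerivAt_eq_zero hlt hfc.continuousOn
    (hfs.trans hft.symm) fun x _ => hf x
  obtain ⟨e, he, hf''e⟩ := exists_hasDerivAt_eq_slope f' f'' hp.1 hf'c.continuousOn
    fun x _ => hf' x
  obtain ⟨d, hd, hf''d⟩ := exists_hasDerivAt_eq_zero (hp.2.trans hq.1) hf'c.continuousOn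
    (hf'p.trans hf'q.symm) fun x _ => hf' x
  have hf''e_neg : f'' e < 0 := by
    rw [hf''e, hf'p]
    exact div_neg_of_neg_of_pos (by linarith) (by linarith [hp.1])
  exact (hf'' he.1 (he.2.trans hd.1) hf''e_neg).ne hf''d

lemma hasDerivAt_tanh (x : ℝ) : HasDerivAt tanh (1 / cosh x ^ 2) x := by
  rw [show tanh = fun y => sinh y / cosh y from funext tanh_eq_sinh_div_cosh]
  refine ((hasDerivAt_sinh x).div (hasDerivAt_cosh x) (cosh_pos x).ne').congr_deriv ?_
  rw [← cosh_sq_sub_sinh_sq x]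
  ring

lemma concaveOn_tanh : ConcaveOn ℝ (Ici 0) tanh := by
  have hderiv : deriv tanh = fun x => 1 / cosh x ^ 2 := funext fun x => (hasDerivAt_tanh x).deriv
  refine AntitoneOn.concaveOn_of_deriv (convex_Ici 0)
    (fun x _ => (hasDerivAt_tanh x).continuousAt.continuousWithinAt)
    (fun x _ => (hasDerivAt_tanh x).differentiableAt.differentiableWithinAt) ?_
  rw [interior_Ici, hderiv]
  intro x hx y hy hxy
  have hcosh : cosh x ≤ cosh y := cosh_le_cosh.2 (by rwa [abs_of_pos hx, abs_of_pos hy])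
  dsimp only
  gcongr

lemma mul_sinh_lt_mul_cosh_of_lt (a : ℝ) {e d : ℝ} (he : 0 < e) (hed : e < d)
    (h : a * sinh e < e * cosh e) : a * sinh d < d * cosh d := by
  have hd : 0 < d := he.trans hed
  rcases le_or_gt a 0 with ha | ha
  · nlinarith [sinh_pos_iff.2 hd, cosh_pos d]
  have htanh : ∀ u, a * sinh u < u * cosh u ↔ a * tanh u < u := fun u => by
    rw [tanh_eq_sinh_div_cosh, mul_div_assoc', div_lt_iff₀ (cosh_pos u)]
  rw [htanh] at h ⊢
  have hslope := concaveOn_tanh.slope_anti_adjacent (mem_Ici.2 le_rfl) (mem_Ici.2 hd.le) he hed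
  rw [tanh_zero, sub_zero, sub_zero, div_le_div_iff₀ (by linarith) he] at hslope
  nlinarith [mul_lt_mul_of_pos_left h hd]

theorem existsUnique_pos_mul_sinh_eq (K c : ℝ) (hc : 0 ≤ c) (hK : 1 + c < K) :
    ∃! u, 0 < u ∧ K * sinh u = u * (cosh u + c) := by
  set Φ : ℝ → ℝ := fun u => K * sinh u - u * (cosh u + c)
  set Φ' : ℝ → ℝ := fun u => (K - 1) * cosh u - u * sinh u - c
  have hΦ : ∀ u, HasDerivAt Φ (Φ' u) u := fun u => by
    refine (((hasDerivAt_sinh u).const_mul K).sub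
      ((hasDerivAt_id u).mul ((hasDerivAt_cosh u).add_const c))).congr_deriv ?_
    simp only [Φ', id]
    ring
  have hΦ' : ∀ u, HasDerivAt Φ' ((K - 2) * sinh u - u * cosh u) u := fun u => by
    refine ((((hasDerivAt_cosh u).const_mul (K - 1)).sub
      ((hasDerivAt_id u).mul (hasDerivAt_sinh u))).sub_const c).congr_deriv ?_
    simp only [id]
    ring
  have hΦ0 : Φ 0 = 0 := by simp [Φ]
  have hΦ'0 : 0 < Φ' 0 := by
    simp only [Φ', cosh_zero, sinh_zero, mul_zero, mul_one, sub_zero]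
    linarith
  have hΦK : Φ K < 0 := by
    have hK0 : 0 < K := by linarith
    nlinarith [sinh_lt_cosh K]
  obtain ⟨u, hu, hΦu⟩ := exists_mem_Ioo_eq_zero_of_hasDerivAt_pos (by linarith)
    (fun x _ => (hΦ x).continuousAt.continuousWithinAt) hΦ0 (hΦ 0) hΦ'0 hΦK
  have huniq := subsingleton_zeros_Ioi_of_deriv2_neg_persists hΦ hΦ' hΦ0 hΦ'0
    fun e d he hed => by simpa only [sub_neg] using mul_sinh_lt_mul_cosh_of_lt (K - 2) he hed
  exact ⟨u, ⟨hu.1, sub_eq_zero.1 hΦu⟩, fun v hv =>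
    huniq ⟨hv.1, sub_eq_zero.2 hv.2⟩ ⟨hu.1, hΦu⟩⟩

lemma tanh_add_add_tanh_sub (x y : ℝ) :
    tanh (x + y) + tanh (x - y) = 2 * sinh (2 * x) / (cosh (2 * x) + cosh (2 * y)) := by
  have hcosh : cosh (2 * x) + cosh (2 * y) = 2 * (cosh (x + y) * cosh (x - y)) := by
    rw [show 2 * x = (x + y) + (x - y) by ring, show 2 * y = (x + y) - (x - y) by ring,
      cosh_add (x + y), cosh_sub (x + y)]
    ring
  have hsinh : sinh (2 * x) = sinh (x + y) * cosh (x - y) + cosh (x + y) * sinh (x - y) := by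
    rw [← sinh_add]
    ring_nf
  have := cosh_pos (x + y)
  have := cosh_pos (x - y)
  rw [hcosh, hsinh, tanh_eq_sinh_div_cosh, tanh_eq_sinh_div_cosh]
  field_simp

theorem unique_positive_fixed_point_supercritical_general (β h : ℝ)
    (hβ : 3 / 2 * Real.cosh h ^ 2 < β)
    (Γ : ℝ → ℝ)
    (hΓ : ∀ x, Γ x = β / 3 * (Real.tanh (x + h) + Real.tanh (x - h))) :
    ∃! x : ℝ, 0 < x ∧ Γ x = x := by
  have hfix : ∀ x, Γ x = x ↔ 4 * β / 3 * sinh (2 * x) = 2 * x * (cosh (2 * x) + cosh (2 * h)) := by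
    intro x
    have hpos : 0 < cosh (2 * x) + cosh (2 * h) := by positivity
    rw [hΓ, tanh_add_add_tanh_sub, mul_div_assoc', div_eq_iff hpos.ne']
    constructor <;> intro H <;> linarith
  have hK : 1 + cosh (2 * h) < 4 * β / 3 := by
    rw [cosh_two_mul, ← cosh_sq_sub_sinh_sq h]
    linarith
  obtain ⟨u, ⟨hu, hΦu⟩, huniq⟩ := existsUnique_pos_mul_sinh_eq _ _ (cosh_pos _).le hK
  refine ⟨u / 2, ⟨by positivity, (hfix _).2 (by rwa [mul_div_cancel₀ u two_ne_zero])⟩, ?_⟩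
  rintro x ⟨hx, hΓx⟩
  linarith [huniq (2 * x) ⟨by positivity, (hfix x).1 hΓx⟩]

/-- For `h ≥ 0` and `β > (3/2)cosh²h`, the fixed point equation
`Γ_{β,h}(x) = x` has exactly one positive solution. -/
theorem unique_positive_fixed_point_supercritical (β h : ℝ) (hh : 0 ≤ h)
    (hβ : 3 / 2 * Real.cosh h ^ 2 < β)
    (Γ : ℝ → ℝ)
    (hΓ : ∀ x, Γ x = β / 3 * (Real.tanh (x + h) + Real.tanh (x - h))) :
    ∃! x : ℝ, 0 < x ∧ Γ x = x :=
  unique_positive_fixed_point_supercritical_general β h hβ Γ hΓ
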